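/- Multiplicativity of the Herbrand quotient: given a short exact sequence 0 → M' → M → M'' → 0 of modules over a finite cyclic group G, if two of the Herbrand quotients h(M'), h(M), h(M'') are defined then so is the third, and h(M) = h(M')·h(M''). -/

import Mathlib

namespace Tate

variable (G : Type) [Group G] (M : Type) [AddCommGroup M] [DistribMulAction G M]

/-- Inhomogeneous (co)chain groups: functions `G^m → M`. -/
abbrev C (m : ℕ) : Type := (Fin m → G) → M

/-- The standard inhomogeneous coboundary map. -/
def dPlus (m : ℕ) : C G M m →+ C G M (m + 1) :=
  AddMonoidHom.mk' (fun f g =>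
    g 0 • f (fun i => g i.succ) +
      ∑ j : Fin (m + 1), ((-1 : ℤ) ^ (j.val + 1)) • f (Fin.contractNth j (· * ·) g))
    (fun a b => by
      funext g
      simp only [Pi.add_apply, smul_add, Finset.sum_add_distrib]
      abel)

variable [Finite G]

/-- The norm map on (co)chains. -/
noncomputable def normMap (m : ℕ) : C G M m →+ C G M m :=
  letI : Fintype G := Fintype.ofFinite G
  AddMonoidHom.mk' (fun f x => ∑ g : G, g • f x)
    (fun a b => by
      funext x
      simp only [Pi.add_apply, smul_add, Finset.sum_add_distrib])

/-- The standard inhomogeneous boundary map on chains of a finite group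
(chains of a finite group are plain functions `G^m → M`). -/
noncomputable def dMinus (m : ℕ) : C G M (m + 1) →+ C G M m :=
  letI : Fintype G := Fintype.ofFinite G
  letI := Classical.decEq G
  AddMonoidHom.mk' (fun f h =>
    (∑ g : G, g⁻¹ • f (Fin.cons g h)) +
      (∑ j : Fin m, ((-1 : ℤ) ^ (j.val + 1)) •
        ∑ g : G, f (Fin.insertNth j.castSucc g (Function.update h j (g⁻¹ * h j)))) +
      ((-1 : ℤ) ^ (m + 1)) • ∑ g : G, f (Fin.snoc h g))
    (fun a b => by
      funext x
      simp only [Pi.add_apply, smul_add, Finset.sum_add_distrib]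
      abel)

/-- The size of the tuples at degree `n` of the complete standard complex. -/
def dim : ℤ → ℕ
  | .ofNat m => m
  | .negSucc m => m

/-- Cocycles of the complete standard complex. -/
noncomputable def cocycles : ∀ n : ℤ, AddSubgroup (C G M (dim n))
  | .ofNat m => (dPlus G M m).ker
  | .negSucc 0 => (normMap G M 0).ker
  | .negSucc (m + 1) => (dMinus G M m).ker

/-- Coboundaries of the complete standard complex. -/
noncomputable def boundaries : ∀ n : ℤ, AddSubgroup (C G M (dim n))
  | .ofNat 0 => (normMap G M 0).range
  | .ofNat (m + 1) => (dPlus G M m).range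
  | .negSucc m => (dMinus G M m).range

/-- Tate cohomology of a finite group `G` with coefficients in the `G`-module `M`:
`H_T^n(G, M)` for all `n : ℤ`. -/
noncomputable def tate (n : ℤ) : Type :=
  cocycles G M n ⧸ (boundaries G M n).addSubgroupOf (cocycles G M n)

noncomputable instance (n : ℤ) : AddCommGroup (tate G M n) :=
  inferInstanceAs (AddCommGroup (_ ⧸ _))

end Tate

/-- The trivial action of a group on an abelian group. -/
def Tate.trivialAction (G M : Type) [Group G] [AddCommGroup M] : DistribMulAction G M where
  smul _ m := m
  one_smul _ := rfl
  mul_smul _ _ _ := rfl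
  smul_zero _ := rfl
  smul_add _ _ _ := rfl

namespace Tate

variable (G : Type) [Group G] [Finite G] (M : Type) [AddCommGroup M] [DistribMulAction G M]

/-- The Herbrand quotient `h(M) = |H_T^0(G,M)| / |H_T^1(G,M)|`. -/
noncomputable def herbrand : ℚ :=
  (Nat.card (tate G M 0) : ℚ) / (Nat.card (tate G M 1) : ℚ)

/-- The Herbrand quotient is defined when both `H_T^0(G,M)` and `H_T^1(G,M)` are finite. -/
def HerbrandDefined : Prop :=
  Finite (tate G M 0) ∧ Finite (tate G M 1)

end Tate

/-!
Fix a generator `σ` of `G` and put `D = σ - 1`, `N = ∑_{τ ∈ G} τ` on a `G`-module `M`.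
Then `DN = ND = 0`, `H_T^0(G, M) ≅ ker D / im N`, and `H_T^1(G, M) ≅ ker N / im D` because a
1-cocycle `f` is determined by `f σ` through `f (σ ^ k) = ∑_{i < k} σ ^ i • f σ`.
A short exact sequence of `G`-modules is thus a short exact sequence of 2-periodic complexes,
and the snake lemma turns their homology groups into an exact hexagon. In an exact hexagon
each group is finite when its two neighbours are, and the products of the orders of
alternate groups agree; read off the hexagon, these are exactly the two claims.
-/

namespace Function.Exact

variable {X Y Z : Type*} [AddGroup X] [AddGroup Y] [AddGroup Z] {f : X →+ Y} {g : Y →+ Z}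

theorem card_eq_card_range_mul_card_range (h : Function.Exact f g) :
    Nat.card Y = Nat.card f.range * Nat.card g.range := by
  rw [AddSubgroup.card_eq_card_quotient_mul_card_addSubgroup g.ker,
    Nat.card_congr (QuotientAddGroup.quotientKerEquivRange g).toEquiv,
    AddMonoidHom.exact_iff.mp h, mul_comm]

theorem finite_of_finite_of_finite (h : Function.Exact f g) [Finite X] [Finite Z] :
    Finite Y :=
  Nat.finite_of_card_ne_zero <| by
    rw [h.card_eq_card_range_mul_card_range]
    have : Finite f.range := Finite.of_surjective _ f.rangeRestrict_surjective
    exact mul_ne_zero Nat.card_pos.ne' Nat.card_pos.ne'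

end Function.Exact

theorem card_mul_card_mul_card_eq_of_exact_hexagon {A₁ A₂ A₃ A₄ A₅ A₆ : Type*}
    [AddGroup A₁] [AddGroup A₂] [AddGroup A₃] [AddGroup A₄] [AddGroup A₅] [AddGroup A₆]
    {f₁ : A₁ →+ A₂} {f₂ : A₂ →+ A₃} {f₃ : A₃ →+ A₄} {f₄ : A₄ →+ A₅} {f₅ : A₅ →+ A₆}
    {f₆ : A₆ →+ A₁} (h₁ : Function.Exact f₁ f₂) (h₂ : Function.Exact f₂ f₃)
    (h₃ : Function.Exact f₃ f₄) (h₄ : Function.Exact f₄ f₅) (h₅ : Function.Exact f₅ f₆)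
    (h₆ : Function.Exact f₆ f₁) :
    Nat.card A₁ * Nat.card A₃ * Nat.card A₅ = Nat.card A₂ * Nat.card A₄ * Nat.card A₆ := by
  rw [h₆.card_eq_card_range_mul_card_range, h₁.card_eq_card_range_mul_card_range,
    h₂.card_eq_card_range_mul_card_range, h₃.card_eq_card_range_mul_card_range,
    h₄.card_eq_card_range_mul_card_range, h₅.card_eq_card_range_mul_card_range]
  ring

structure PeriodicComplex (A : Type*) [AddCommGroup A] where
  d : A →+ A
  e : A →+ A
  d_e : ∀ a, d (e a) = 0
  e_d : ∀ a, e (d a) = 0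

namespace PeriodicComplex

variable {A B C : Type*} [AddCommGroup A] [AddCommGroup B] [AddCommGroup C]

abbrev swap (P : PeriodicComplex A) : PeriodicComplex A := ⟨P.e, P.d, P.e_d, P.d_e⟩

abbrev homology (P : PeriodicComplex A) : Type _ := P.d.ker ⧸ P.e.range.addSubgroupOf P.d.ker

def cls (P : PeriodicComplex A) (a : A) (ha : P.d a = 0) : P.homology :=
  QuotientAddGroup.mk ⟨a, ha⟩

variable (P : PeriodicComplex A)

theorem cls_surjective (x : P.homology) : ∃ a ha, P.cls a ha = x := by
  obtain ⟨⟨a, ha⟩, rfl⟩ := QuotientAddGroup.mk_surjective x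
  exact ⟨a, ha, rfl⟩

theorem cls_add {a b : A} (ha : P.d a = 0) (hb : P.d b = 0) :
    P.cls (a + b) (by rw [map_add, ha, hb, add_zero]) = P.cls a ha + P.cls b hb :=
  rfl

theorem cls_eq_cls_iff {a b : A} (ha : P.d a = 0) (hb : P.d b = 0) :
    P.cls a ha = P.cls b hb ↔ a - b ∈ P.e.range := by
  rw [cls, cls, QuotientAddGroup.eq, AddSubgroup.mem_addSubgroupOf, ← neg_mem_iff]
  simp [neg_add_eq_sub]

theorem cls_eq_zero_iff {a : A} (ha : P.d a = 0) : P.cls a ha = 0 ↔ a ∈ P.e.range := by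
  rw [cls, QuotientAddGroup.eq_zero_iff, AddSubgroup.mem_addSubgroupOf]

def HasFiniteHomology : Prop := Finite P.homology ∧ Finite P.swap.homology

noncomputable def herbrandQuotient : ℚ := Nat.card P.homology / Nat.card P.swap.homology

structure IsChainMap (P : PeriodicComplex A) (Q : PeriodicComplex B) (f : A →+ B) : Prop where
  map_d : ∀ a, f (P.d a) = Q.d (f a)
  map_e : ∀ a, f (P.e a) = Q.e (f a)

namespace IsChainMap

variable {P} {Q : PeriodicComplex B} {f : A →+ B}

theorem swap (hf : IsChainMap P Q f) : IsChainMap P.swap Q.swap f := ⟨hf.map_e, hf.map_d⟩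

def homologyMap (hf : IsChainMap P Q f) : P.homology →+ Q.homology :=
  QuotientAddGroup.map _ _
    ((f.comp P.d.ker.subtype).codRestrict Q.d.ker fun a => show Q.d (f a) = 0 by
      rw [← hf.map_d, AddMonoidHom.mem_ker.mp a.2, map_zero])
    (by
      rintro a ⟨x, hx⟩
      exact ⟨f x, by rw [← hf.map_e, hx]; rfl⟩)

theorem homologyMap_cls (hf : IsChainMap P Q f) {a : A} (ha : P.d a = 0) :
    hf.homologyMap (P.cls a ha) = Q.cls (f a) (by rw [← hf.map_d, ha, map_zero]) :=
  rfl

end IsChainMap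

structure ShortExact (PA : PeriodicComplex A) (PB : PeriodicComplex B) (PC : PeriodicComplex C)
    (f : A →+ B) (g : B →+ C) : Prop where
  injective : Function.Injective f
  exact : Function.Exact f g
  surjective : Function.Surjective g
  left : IsChainMap PA PB f
  right : IsChainMap PB PC g

namespace ShortExact

variable {PA : PeriodicComplex A} {PB : PeriodicComplex B} {PC : PeriodicComplex C}
  {f : A →+ B} {g : B →+ C}

theorem swap (h : ShortExact PA PB PC f g) : ShortExact PA.swap PB.swap PC.swap f g :=
  ⟨h.injective, h.exact, h.surjective, h.left.swap, h.right.swap⟩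

theorem exists_lift (h : ShortExact PA PB PC f g) (c : PC.d.ker) :
    ∃ b a, g b = c ∧ f a = PB.d b := by
  obtain ⟨b, hb⟩ := h.surjective c
  obtain ⟨a, ha⟩ := (h.exact _).mp (show g (PB.d b) = 0 by rw [h.right.map_d, hb]; exact c.2)
  exact ⟨b, a, hb, ha⟩

theorem e_eq_zero_of_apply_eq_d (h : ShortExact PA PB PC f g) {a : A} {b : B}
    (hab : f a = PB.d b) : PA.e a = 0 :=
  h.injective (by rw [h.left.map_e, hab, PB.e_d, map_zero])

noncomputable def connectingAux (h : ShortExact PA PB PC f g) (c : PC.d.ker) :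
    PA.swap.homology :=
  PA.swap.cls _ (h.e_eq_zero_of_apply_eq_d (h.exists_lift c).choose_spec.choose_spec.2)

theorem connectingAux_eq (h : ShortExact PA PB PC f g) (c : PC.d.ker) {a : A} {b : B}
    (hb : g b = c) (ha : f a = PB.d b) :
    h.connectingAux c = PA.swap.cls a (h.e_eq_zero_of_apply_eq_d ha) := by
  obtain ⟨hb₀, ha₀⟩ := (h.exists_lift c).choose_spec.choose_spec
  rw [connectingAux, cls_eq_cls_iff]
  obtain ⟨y, hy⟩ := (h.exact _).mp (show g (_ - b) = 0 by rw [map_sub, hb₀, hb, sub_self])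
  exact ⟨y, h.injective (by rw [h.left.map_d, hy, map_sub, map_sub, ha₀, ha])⟩

noncomputable def connecting (h : ShortExact PA PB PC f g) :
    PC.homology →+ PA.swap.homology :=
  QuotientAddGroup.lift _
    (AddMonoidHom.mk' h.connectingAux fun x y => by
      obtain ⟨bx, ax, hbx, hax⟩ := h.exists_lift x
      obtain ⟨by', ay, hby, hay⟩ := h.exists_lift y
      rw [h.connectingAux_eq x hbx hax, h.connectingAux_eq y hby hay,
        h.connectingAux_eq (x + y) (a := ax + ay) (b := bx + by') (by rw [map_add, hbx, hby]; rfl)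
          (by rw [map_add, map_add, hax, hay]), cls_add])
    (by
      rintro c ⟨c', hc'⟩
      obtain ⟨b', rfl⟩ := h.surjective c'
      rw [AddMonoidHom.mem_ker, AddMonoidHom.mk'_apply, h.connectingAux_eq c (b := PB.e b') (a := 0)
        (by rw [h.right.map_e, hc']; rfl) (by rw [map_zero, PB.d_e]), cls_eq_zero_iff]
      exact ⟨0, map_zero _⟩)

theorem connecting_cls (h : ShortExact PA PB PC f g) {c : C} (hc : PC.d c = 0) {a : A} {b : B}
    (hb : g b = c) (ha : f a = PB.d b) :
    h.connecting (PC.cls c hc) = PA.swap.cls a (h.e_eq_zero_of_apply_eq_d ha) :=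
  h.connectingAux_eq ⟨c, hc⟩ hb ha

theorem exact_homologyMap (h : ShortExact PA PB PC f g) :
    Function.Exact h.left.homologyMap h.right.homologyMap := by
  intro y
  obtain ⟨b, hb, rfl⟩ := PB.cls_surjective y
  rw [IsChainMap.homologyMap_cls, cls_eq_zero_iff]
  constructor
  · rintro ⟨c, hc⟩
    obtain ⟨w, rfl⟩ := h.surjective c
    obtain ⟨a, ha⟩ := (h.exact _).mp
      (show g (b - PB.e w) = 0 by rw [map_sub, h.right.map_e, hc, sub_self])
    have hda : PA.d a = 0 :=
      h.injective (by rw [h.left.map_d, ha, map_sub, hb, PB.d_e, sub_zero, map_zero])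
    refine ⟨PA.cls a hda, ?_⟩
    rw [IsChainMap.homologyMap_cls, cls_eq_cls_iff]
    exact ⟨-w, by rw [map_neg, ha]; abel⟩
  · rintro ⟨x, hx⟩
    obtain ⟨a, ha, rfl⟩ := PA.cls_surjective x
    rw [IsChainMap.homologyMap_cls, cls_eq_cls_iff] at hx
    obtain ⟨w, hw⟩ := hx
    refine ⟨-g w, ?_⟩
    rw [map_neg, ← h.right.map_e, hw, map_sub, h.exact.apply_apply_eq_zero, zero_sub, neg_neg]

theorem exact_homologyMap_connecting (h : ShortExact PA PB PC f g) :
    Function.Exact h.right.homologyMap h.connecting := by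
  intro y
  obtain ⟨c, hc, rfl⟩ := PC.cls_surjective y
  obtain ⟨b, a, hb, ha⟩ := h.exists_lift ⟨c, hc⟩
  rw [h.connecting_cls hc hb ha, cls_eq_zero_iff]
  constructor
  · rintro ⟨x, rfl⟩
    have hdb : PB.d (b - f x) = 0 := by rw [map_sub, ← ha, ← h.left.map_d, sub_self]
    refine ⟨PB.cls (b - f x) hdb, ?_⟩
    rw [IsChainMap.homologyMap_cls, cls_eq_cls_iff]
    exact ⟨0, by rw [map_zero, map_sub, h.exact.apply_apply_eq_zero, sub_zero, hb, sub_self]⟩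
  · rintro ⟨x, hx⟩
    obtain ⟨b', hb', rfl⟩ := PB.cls_surjective x
    have hδ := congrArg h.connecting hx
    rw [IsChainMap.homologyMap_cls, h.connecting_cls _ rfl (a := 0) (by rw [map_zero, hb']),
      h.connecting_cls hc hb ha, eq_comm, cls_eq_cls_iff, sub_zero] at hδ
    exact hδ

theorem exact_connecting_homologyMap (h : ShortExact PA PB PC f g) :
    Function.Exact h.connecting h.left.swap.homologyMap := by
  intro y
  obtain ⟨a, ha, rfl⟩ := PA.swap.cls_surjective y
  rw [IsChainMap.homologyMap_cls, cls_eq_zero_iff]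
  constructor
  · rintro ⟨b, hb⟩
    have hdc : PC.d (g b) = 0 := by
      rw [← h.right.map_d]; exact hb ▸ h.exact.apply_apply_eq_zero a
    exact ⟨PC.cls (g b) hdc, h.connecting_cls hdc rfl hb.symm⟩
  · rintro ⟨x, hx⟩
    obtain ⟨c, hc, rfl⟩ := PC.cls_surjective x
    obtain ⟨b, a', hb, ha'⟩ := h.exists_lift ⟨c, hc⟩
    rw [h.connecting_cls hc hb ha', cls_eq_cls_iff] at hx
    obtain ⟨w, hw⟩ := hx
    refine ⟨b - f w, ?_⟩
    rw [map_sub, ← h.left.map_d, hw, ← ha', map_sub, sub_sub_cancel]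

theorem card_homology_mul (h : ShortExact PA PB PC f g) :
    Nat.card PA.homology * Nat.card PC.homology * Nat.card PB.swap.homology =
      Nat.card PB.homology * Nat.card PA.swap.homology * Nat.card PC.swap.homology :=
  card_mul_card_mul_card_eq_of_exact_hexagon h.exact_homologyMap
    h.exact_homologyMap_connecting h.exact_connecting_homologyMap h.swap.exact_homologyMap
    h.swap.exact_homologyMap_connecting h.swap.exact_connecting_homologyMap

theorem hasFiniteHomology_of_two (h : ShortExact PA PB PC f g)
    (h2 : PA.HasFiniteHomology ∧ PB.HasFiniteHomology ∨ PA.HasFiniteHomology ∧ PC.HasFiniteHomology ∨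
      PB.HasFiniteHomology ∧ PC.HasFiniteHomology) :
    PA.HasFiniteHomology ∧ PB.HasFiniteHomology ∧ PC.HasFiniteHomology := by
  rcases h2 with ⟨⟨_, _⟩, ⟨_, _⟩⟩ | ⟨⟨_, _⟩, ⟨_, _⟩⟩ | ⟨⟨_, _⟩, ⟨_, _⟩⟩
  · exact ⟨⟨‹_›, ‹_›⟩, ⟨‹_›, ‹_›⟩, h.exact_homologyMap_connecting.finite_of_finite_of_finite,
      h.swap.exact_homologyMap_connecting.finite_of_finite_of_finite⟩
  · exact ⟨⟨‹_›, ‹_›⟩, ⟨h.exact_homologyMap.finite_of_finite_of_finite,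
      h.swap.exact_homologyMap.finite_of_finite_of_finite⟩, ⟨‹_›, ‹_›⟩⟩
  · exact ⟨⟨h.swap.exact_connecting_homologyMap.finite_of_finite_of_finite,
      h.exact_connecting_homologyMap.finite_of_finite_of_finite⟩, ⟨‹_›, ‹_›⟩, ⟨‹_›, ‹_›⟩⟩

theorem herbrandQuotient_eq_mul (h : ShortExact PA PB PC f g) (hA : PA.HasFiniteHomology)
    (hC : PC.HasFiniteHomology) :
    PB.herbrandQuotient = PA.herbrandQuotient * PC.herbrandQuotient := by
  obtain ⟨⟨_, _⟩, ⟨_, _⟩, ⟨_, _⟩⟩ := h.hasFiniteHomology_of_two (.inr (.inl ⟨hA, hC⟩))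
  rw [herbrandQuotient, herbrandQuotient, herbrandQuotient, div_mul_div_comm,
    div_eq_div_iff (by simp [Nat.card_pos.ne']) (by simp [Nat.card_pos.ne']), ← mul_assoc]
  exact_mod_cast h.card_homology_mul.symm

end ShortExact

end PeriodicComplex

namespace Tate

section HerbrandComplex

variable {G : Type*} [Group G] [Fintype G] (M : Type*) [AddCommGroup M] [DistribMulAction G M]

variable (G) in
def normHom : M →+ M := ∑ τ : G, DistribSMul.toAddMonoidHom M τ

variable {M}

theorem normHom_apply (m : M) : normHom G M m = ∑ τ : G, τ • m := by
  simp [normHom]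

theorem smul_normHom (τ : G) (m : M) : τ • normHom G M m = normHom G M m := by
  simp only [normHom_apply, Finset.smul_sum, ← mul_smul]
  exact Equiv.sum_comp (Equiv.mulLeft τ) (· • m)

theorem normHom_smul (τ : G) (m : M) : normHom G M (τ • m) = normHom G M m := by
  simp only [normHom_apply, ← mul_smul]
  exact Equiv.sum_comp (Equiv.mulRight τ) (· • m)

variable (M) in
def herbrandComplex (σ : G) : PeriodicComplex M where
  d := DistribSMul.toAddMonoidHom M σ - AddMonoidHom.id M
  e := normHom G M
  d_e m := sub_eq_zero.mpr (smul_normHom σ m)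
  e_d m := by simp [normHom_smul]

theorem isChainMap_herbrandComplex {N : Type*} [AddCommGroup N] [DistribMulAction G N]
    (σ : G) {f : M →+ N} (hf : ∀ (τ : G) x, f (τ • x) = τ • f x) :
    (herbrandComplex M σ).IsChainMap (herbrandComplex N σ) f :=
  ⟨fun m => by simp [herbrandComplex, hf], fun m => by simp [herbrandComplex, normHom_apply, hf]⟩

end HerbrandComplex

section PartialNorm

variable {G M : Type*} [Monoid G] [AddCommMonoid M] [DistribMulAction G M] {σ : G} {x : M}

def partialNorm (σ : G) (k : ℕ) (x : M) : M :=
  ∑ i ∈ Finset.range k, σ ^ i • x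

theorem partialNorm_add (σ : G) (k l : ℕ) (x : M) :
    partialNorm σ (k + l) x = partialNorm σ k x + σ ^ k • partialNorm σ l x := by
  simp [partialNorm, Finset.sum_range_add, Finset.smul_sum, pow_add, mul_smul]

theorem partialNorm_succ (σ : G) (k : ℕ) (x : M) :
    partialNorm σ (k + 1) x = partialNorm σ k x + σ ^ k • x :=
  Finset.sum_range_succ _ _

theorem partialNorm_orderOf_mul (hx : partialNorm σ (orderOf σ) x = 0) (q : ℕ) :
    partialNorm σ (orderOf σ * q) x = 0 := by
  induction q with
  | zero => simp [partialNorm]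
  | succ q ih => rw [Nat.mul_succ, partialNorm_add, ih, hx, smul_zero, add_zero]

end PartialNorm

theorem partialNorm_smul_sub_self {G M : Type*} [Monoid G] [AddCommGroup M]
    [DistribMulAction G M] (σ : G) (k : ℕ) (m : M) :
    partialNorm σ k (σ • m - m) = σ ^ k • m - m := by
  simp only [partialNorm, smul_sub, ← mul_smul, ← pow_succ]
  rw [Finset.sum_range_sub (fun i => σ ^ i • m), pow_zero, one_smul]

section Generator

variable {G M : Type*} [Group G] [AddCommGroup M] [DistribMulAction G M] {σ : G} {x : M}

theorem partialNorm_congr (hx : partialNorm σ (orderOf σ) x = 0) {k l : ℕ} (h : σ ^ k = σ ^ l) :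
    partialNorm σ k x = partialNorm σ l x := by
  have hmod (k : ℕ) : partialNorm σ k x = partialNorm σ (k % orderOf σ) x := by
    conv_lhs => rw [← Nat.mod_add_div k (orderOf σ)]
    rw [partialNorm_add, partialNorm_orderOf_mul hx, smul_zero, add_zero]
  rw [hmod k, hmod l, (pow_eq_pow_iff_modEq.mp h : k % _ = l % _)]

theorem exists_pow_eq [Finite G] (hσ : ∀ τ : G, τ ∈ Subgroup.zpowers σ) (τ : G) :
    ∃ k : ℕ, σ ^ k = τ :=
  mem_powers_iff_mem_zpowers.mpr (hσ τ)

theorem normHom_eq_partialNorm [Fintype G] (hσ : ∀ τ : G, τ ∈ Subgroup.zpowers σ) (x : M) :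
    normHom G M x = partialNorm σ (orderOf σ) x := by
  classical
  rw [normHom_apply, ← IsCyclic.image_range_orderOf hσ, Finset.sum_image, partialNorm]
  intro i hi j hj hij
  exact pow_injOn_Iio_orderOf (by simpa using hi) (by simpa using hj) hij

end Generator

section Cochains

variable {G : Type} [Group G] {M : Type} [AddCommGroup M] [DistribMulAction G M]

theorem dPlus_zero_apply (f : C G M 0) (v : Fin 1 → G) :
    dPlus G M 0 f v = v 0 • f default - f default := by
  simp [dPlus, Subsingleton.elim _ (default : Fin 0 → G), sub_eq_add_neg]

theorem dPlus_one_apply (f : C G M 1) (v : Fin 2 → G) :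
    dPlus G M 1 f v = v 0 • f (fun _ => v 1) - f (fun _ => v 0 * v 1) + f (fun _ => v 0) := by
  have hf (w : Fin 1 → G) : f w = f fun _ => w 0 :=
    congrArg f (funext fun i => by rw [Fin.fin_one_eq_zero i])
  rw [dPlus, AddMonoidHom.mk'_apply, Fin.sum_univ_two, hf (fun i => v i.succ),
    hf (Fin.contractNth 0 _ v), hf (Fin.contractNth 1 _ v)]
  simp [Fin.contractNth]
  abel

theorem mem_ker_dPlus_zero_iff {f : C G M 0} :
    f ∈ (dPlus G M 0).ker ↔ ∀ τ : G, τ • f default = f default := by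
  simp only [AddMonoidHom.mem_ker, funext_iff, dPlus_zero_apply, Pi.zero_apply, sub_eq_zero]
  exact ⟨fun h τ => h fun _ => τ, fun h v => h (v 0)⟩

theorem cocycle_mul {f : C G M 1} (hf : f ∈ (dPlus G M 1).ker) (τ ρ : G) :
    f (fun _ => τ * ρ) = τ • f (fun _ => ρ) + f (fun _ => τ) := by
  have h := congrFun (AddMonoidHom.mem_ker.mp hf) ![τ, ρ]
  simp only [dPlus_one_apply, Matrix.cons_val_zero, Matrix.cons_val_one, Pi.zero_apply] at h
  rw [← sub_eq_zero, ← neg_eq_zero, ← h]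
  abel

theorem cocycle_one {f : C G M 1} (hf : f ∈ (dPlus G M 1).ker) : f (fun _ => 1) = 0 := by
  simpa using cocycle_mul hf 1 1

theorem cocycle_pow {f : C G M 1} (hf : f ∈ (dPlus G M 1).ker) (σ : G) (k : ℕ) :
    f (fun _ => σ ^ k) = partialNorm σ k (f fun _ => σ) := by
  induction k with
  | zero => simp [cocycle_one hf, partialNorm]
  | succ k ih => rw [pow_succ, cocycle_mul hf, ih, partialNorm_succ, add_comm]

end Cochains

section TateCohomology

variable {G : Type} [Group G] [Fintype G] {M : Type} [AddCommGroup M] [DistribMulAction G M]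
  {σ : G}

theorem normMap_apply {m : ℕ} (f : C G M m) (v : Fin m → G) :
    normMap G M m f v = normHom G M (f v) := by
  rw [normHom_apply, normMap, AddMonoidHom.mk'_apply]
  congr
  exact Subsingleton.elim _ _

theorem normHom_cocycle_generator (hσ : ∀ τ : G, τ ∈ Subgroup.zpowers σ) {f : C G M 1}
    (hf : f ∈ (dPlus G M 1).ker) : normHom G M (f fun _ => σ) = 0 := by
  rw [normHom_eq_partialNorm hσ, ← cocycle_pow hf, pow_orderOf_eq_one, cocycle_one hf]

variable (M σ) in
noncomputable def cocycleZeroToHomology :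
    (dPlus G M 0).ker →+ (herbrandComplex M σ).homology :=
  AddMonoidHom.mk'
    (fun f => (herbrandComplex M σ).cls (f.1 default)
      (sub_eq_zero.mpr (mem_ker_dPlus_zero_iff.mp f.2 σ)))
    fun _ _ => rfl

theorem cocycleZeroToHomology_surjective (hσ : ∀ τ : G, τ ∈ Subgroup.zpowers σ) :
    Function.Surjective (cocycleZeroToHomology M σ) := by
  intro y
  obtain ⟨m, hm, rfl⟩ := (herbrandComplex M σ).cls_surjective y
  have hσm : σ ∈ MulAction.stabilizer G m := sub_eq_zero.mp hm
  exact ⟨⟨fun _ => m, mem_ker_dPlus_zero_iff.mpr fun τ => Subgroup.zpowers_le.mpr hσm (hσ τ)⟩,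
    rfl⟩

theorem ker_cocycleZeroToHomology :
    (cocycleZeroToHomology M σ).ker = (normMap G M 0).range.addSubgroupOf (dPlus G M 0).ker := by
  ext f
  rw [AddMonoidHom.mem_ker, AddSubgroup.mem_addSubgroupOf]
  refine ((herbrandComplex M σ).cls_eq_zero_iff _).trans ⟨?_, ?_⟩
  · rintro ⟨x, hx⟩
    refine ⟨fun _ => x, funext fun v => ?_⟩
    rw [normMap_apply, Subsingleton.elim v default]
    exact hx
  · rintro ⟨c, hc⟩
    exact ⟨c default, by rw [← hc, normMap_apply]; rfl⟩

noncomputable def tateZeroEquiv (hσ : ∀ τ : G, τ ∈ Subgroup.zpowers σ) :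
    tate G M 0 ≃+ (herbrandComplex M σ).homology :=
  (QuotientAddGroup.quotientAddEquivOfEq ker_cocycleZeroToHomology.symm).trans
    (QuotientAddGroup.quotientKerEquivOfSurjective _ (cocycleZeroToHomology_surjective hσ))

variable (M) in
noncomputable def cocycleOneToHomology (hσ : ∀ τ : G, τ ∈ Subgroup.zpowers σ) :
    (dPlus G M 1).ker →+ (herbrandComplex M σ).swap.homology :=
  AddMonoidHom.mk'
    (fun f => (herbrandComplex M σ).swap.cls (f.1 fun _ => σ) (normHom_cocycle_generator hσ f.2))
    fun _ _ => rfl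

theorem cocycleOneToHomology_surjective (hσ : ∀ τ : G, τ ∈ Subgroup.zpowers σ) :
    Function.Surjective (cocycleOneToHomology M hσ) := by
  intro y
  obtain ⟨x, hx, rfl⟩ := (herbrandComplex M σ).swap.cls_surjective y
  have hx' : partialNorm σ (orderOf σ) x = 0 := by rwa [← normHom_eq_partialNorm hσ]
  choose k hk using exists_pow_eq hσ
  -- `F (σ ^ k) = ∑_{i < k} σ ^ i • x` depends only on `σ ^ k` because `N x = 0`.
  let F : C G M 1 := fun v => partialNorm σ (k (v 0)) x
  have hF : F ∈ (dPlus G M 1).ker := by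
    refine AddMonoidHom.mem_ker.mpr (funext fun v => ?_)
    have hmul : σ ^ k (v 0 * v 1) = σ ^ (k (v 0) + k (v 1)) := by rw [pow_add, hk, hk, hk]
    have hsmul : v 0 • F (fun _ => v 1) = σ ^ k (v 0) • partialNorm σ (k (v 1)) x := by rw [hk]
    rw [dPlus_one_apply, hsmul, Pi.zero_apply]
    simp only [F, partialNorm_congr hx' hmul, partialNorm_add]
    abel
  refine ⟨⟨F, hF⟩, (PeriodicComplex.cls_eq_cls_iff _ _ _).mpr ⟨0, ?_⟩⟩
  rw [map_zero, eq_comm, sub_eq_zero]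
  exact (partialNorm_congr hx' ((hk σ).trans (pow_one σ).symm)).trans (by simp [partialNorm])

theorem ker_cocycleOneToHomology (hσ : ∀ τ : G, τ ∈ Subgroup.zpowers σ) :
    (cocycleOneToHomology M hσ).ker =
      (dPlus G M 0).range.addSubgroupOf (dPlus G M 1).ker := by
  ext f
  rw [AddMonoidHom.mem_ker, AddSubgroup.mem_addSubgroupOf]
  refine ((herbrandComplex M σ).swap.cls_eq_zero_iff _).trans ⟨?_, ?_⟩
  · rintro ⟨m, hm⟩
    refine ⟨fun _ => m, funext fun v => ?_⟩
    obtain ⟨k, hk⟩ := exists_pow_eq hσ (v 0)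
    have hv : v = fun _ => σ ^ k := funext fun i => by rw [Fin.fin_one_eq_zero i, hk]
    rw [dPlus_zero_apply, hv, cocycle_pow f.2, ← hm]
    exact (partialNorm_smul_sub_self σ k m).symm
  · rintro ⟨c, hc⟩
    exact ⟨c default, by rw [← hc, dPlus_zero_apply]; rfl⟩

noncomputable def tateOneEquiv (hσ : ∀ τ : G, τ ∈ Subgroup.zpowers σ) :
    tate G M 1 ≃+ (herbrandComplex M σ).swap.homology :=
  (QuotientAddGroup.quotientAddEquivOfEq (ker_cocycleOneToHomology hσ).symm).trans
    (QuotientAddGroup.quotientKerEquivOfSurjective _ (cocycleOneToHomology_surjective hσ))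

theorem herbrandDefined_iff (hσ : ∀ τ : G, τ ∈ Subgroup.zpowers σ) :
    HerbrandDefined G M ↔ (herbrandComplex M σ).HasFiniteHomology :=
  and_congr (tateZeroEquiv hσ).toEquiv.finite_iff (tateOneEquiv hσ).toEquiv.finite_iff

theorem herbrand_eq (hσ : ∀ τ : G, τ ∈ Subgroup.zpowers σ) :
    herbrand G M = (herbrandComplex M σ).herbrandQuotient := by
  rw [herbrand, PeriodicComplex.herbrandQuotient, Nat.card_congr (tateZeroEquiv hσ).toEquiv,
    Nat.card_congr (tateOneEquiv hσ).toEquiv]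

end TateCohomology

end Tate

/-- Multiplicativity of the Herbrand quotient: given a short exact sequence
`0 → M' → M → M'' → 0` of modules over a finite cyclic group `G`, if two of the Herbrand
quotients `h(M')`, `h(M)`, `h(M'')` are defined then so is the third, and
`h(M) = h(M') · h(M'')`. -/
theorem herbrand_quotient_multiplicative (G : Type) [Group G] [Finite G] (hG : IsCyclic G)
    (M' M M'' : Type) [AddCommGroup M'] [AddCommGroup M] [AddCommGroup M'']
    [DistribMulAction G M'] [DistribMulAction G M] [DistribMulAction G M'']
    (f : M' →+ M) (g : M →+ M'')
    (hf : Function.Injective f) (hg : Function.Surjective g)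
    (hfg : f.range = g.ker)
    (hfG : ∀ (σ : G) (x : M'), f (σ • x) = σ • f x)
    (hgG : ∀ (σ : G) (x : M), g (σ • x) = σ • g x)
    (h2 : (Tate.HerbrandDefined G M' ∧ Tate.HerbrandDefined G M) ∨
          (Tate.HerbrandDefined G M' ∧ Tate.HerbrandDefined G M'') ∨
          (Tate.HerbrandDefined G M ∧ Tate.HerbrandDefined G M'')) :
    Tate.HerbrandDefined G M' ∧ Tate.HerbrandDefined G M ∧ Tate.HerbrandDefined G M'' ∧
      Tate.herbrand G M = Tate.herbrand G M' * Tate.herbrand G M'' := by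
  obtain ⟨σ, hσ⟩ := hG.exists_generator
  cases nonempty_fintype G
  have hses : PeriodicComplex.ShortExact (Tate.herbrandComplex M' σ)
      (Tate.herbrandComplex M σ) (Tate.herbrandComplex M'' σ) f g :=
    ⟨hf, AddMonoidHom.exact_iff.mpr hfg.symm, hg, Tate.isChainMap_herbrandComplex σ hfG,
      Tate.isChainMap_herbrandComplex σ hgG⟩
  simp only [Tate.herbrandDefined_iff hσ, Tate.herbrand_eq hσ] at h2 ⊢
  obtain ⟨hA, hB, hC⟩ := hses.hasFiniteHomology_of_two h2
  exact ⟨hA, hB, hC, hses.herbrandQuotient_eq_mul hA hC⟩
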